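/- Fix λ > 1/2 and M ≥ 36, let r_n = M·2^n, r_{n,k} = r_{n+1} − 1 + k/[r_n^λ] (1 ≤ k ≤ [r_n^λ]), and let g(z) = Σ_{n=1}^∞ (1/[r_n^λ]) Σ_{k=1}^{[r_n^λ]} 2z/(r_{n,k}² − z²). Then for every n ≥ 1 and every z in the closed annulus (4/3)r_n ≤ |z| ≤ (5/3)r_n, one has |g(z)| ≤ 30n/(7r_n) + 4/r_n; in particular, sup{|g(z)| : (4/3)r_n ≤ |z| ≤ (5/3)r_n} → 0 as n → ∞. -/

import Mathlib

open Filter Topology Metric Set MeasureTheory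
open scoped Classical

noncomputable section

namespace PaperDyn

/-- `log⁺ x = max (log x) 0`. -/
def logPlus (x : ℝ) : ℝ := max (Real.log x) 0

/-- Multiplicity of `z` as an `a`-point of `f` (`0` if `z` is not an `a`-point). -/
def aPointMult (f : ℂ → ℂ) (a : ℂ) (z : ℂ) : ℕ :=
  if h : MeromorphicAt (fun w => f w - a) z then ((meromorphicOrderAt (fun w => f w - a) z).untopD 0).toNat else 0

/-- Multiplicity of `z` as a pole of `f` (`0` if `z` is not a pole). -/
def poleMult (f : ℂ → ℂ) (z : ℂ) : ℕ :=
  if h : MeromorphicAt f z then (-((meromorphicOrderAt f z).untopD 0)).toNat else 0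

/-- `z` is a pole of `f`. -/
def IsPole (f : ℂ → ℂ) (z : ℂ) : Prop :=
  Tendsto (fun w => ‖f w‖) (𝓝[≠] z) atTop

/-- Number of `a`-points of `f` in `S`, counted with multiplicity. -/
def countA (f : ℂ → ℂ) (a : ℂ) (S : Set ℂ) : ℕ := ∑ᶠ z ∈ S, aPointMult f a z

/-- Number of poles of `f` in `S`, counted with multiplicity. -/
def countPoles (f : ℂ → ℂ) (S : Set ℂ) : ℕ := ∑ᶠ z ∈ S, poleMult f z

/-- Number of times `f` takes the (possibly infinite, `none = ∞`) value `a` on `S`. -/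
def valueCount (f : ℂ → ℂ) (a : Option ℂ) (S : Set ℂ) : ℕ :=
  match a with
  | none => countPoles f S
  | some c => countA f c S

/-- The integrated counting function `N(r, Ω, f = a)` for a value `a` on the sphere. -/
def valueN (f : ℂ → ℂ) (a : Option ℂ) (Ω : Set ℂ) (r : ℝ) : ℝ :=
  ∫ t in (1:ℝ)..r, (valueCount f a (Ω ∩ Metric.ball 0 t) : ℝ) / t

/-- `n(t, f)` : number of poles of `f` in `|z| ≤ t`, counted with multiplicity. -/
def nPoles (f : ℂ → ℂ) (t : ℝ) : ℕ := countPoles f (Metric.closedBall 0 t)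

/-- The Nevanlinna proximity function `m(r,f)`. -/
def proximity (f : ℂ → ℂ) (r : ℝ) : ℝ :=
  (2 * Real.pi)⁻¹ * ∫ θ in (0:ℝ)..(2 * Real.pi),
    logPlus ‖f ((r : ℂ) * Complex.exp (θ * Complex.I))‖

/-- The integrated pole-counting function `N(r,f)`. -/
def nevN (f : ℂ → ℂ) (r : ℝ) : ℝ :=
  (∫ t in (0:ℝ)..r, ((nPoles f t : ℝ) - (nPoles f 0 : ℝ)) / t) + (nPoles f 0 : ℝ) * Real.log r

/-- The Nevanlinna characteristic `T(r,f) = m(r,f) + N(r,f)`. -/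
def nevT (f : ℂ → ℂ) (r : ℝ) : ℝ := proximity f r + nevN f r

/-- The growth order `ρ(f) = limsup_{r→∞} log T(r,f) / log r`, as an extended real. -/
def growthOrder (f : ℂ → ℂ) : EReal :=
  limsup (fun r : ℝ => ((Real.log (nevT f r) / Real.log r : ℝ) : EReal)) atTop

/-- The lower order `λ(f) = liminf_{r→∞} log T(r,f) / log r`, as an extended real. -/
def lowerOrder (f : ℂ → ℂ) : EReal :=
  liminf (fun r : ℝ => ((Real.log (nevT f r) / Real.log r : ℝ) : EReal)) atTop

/-- The maximum modulus `M(r,f)`. -/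
def maxModulus (f : ℂ → ℂ) (r : ℝ) : ℝ := sSup ((fun z => ‖f z‖) '' Metric.sphere (0:ℂ) r)

/-- The minimum modulus `L(r,f)`. -/
def minModulus (f : ℂ → ℂ) (r : ℝ) : ℝ := sInf ((fun z => ‖f z‖) '' Metric.sphere (0:ℂ) r)

/-- The Nevanlinna deficiency of `f` at `∞`. -/
def deltaInfty (f : ℂ → ℂ) : EReal :=
  liminf (fun r : ℝ => ((proximity f r / nevT f r : ℝ) : EReal)) atTop

/-- The Nevanlinna deficiency of `f` at a finite value `a`. -/
def delta (a : ℂ) (f : ℂ → ℂ) : EReal := deltaInfty (fun z => (f z - a)⁻¹)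

/-- A rational function. -/
def IsRationalFn (f : ℂ → ℂ) : Prop :=
  ∃ p q : Polynomial ℂ, q ≠ 0 ∧ ∀ z : ℂ, q.eval z ≠ 0 → f z = p.eval z / q.eval z

/-- A transcendental meromorphic function on `ℂ`. -/
def TranscendentalMeromorphic (f : ℂ → ℂ) : Prop :=
  MeromorphicOn f Set.univ ∧ ¬ IsRationalFn f

/-- A transcendental entire function. -/
def TranscendentalEntire (f : ℂ → ℂ) : Prop :=
  Differentiable ℂ f ∧ ¬ ∃ p : Polynomial ℂ, ∀ z, f z = p.eval z

/-- The chordal (spherical) distance between two finite points. -/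
def sphDistC (a b : ℂ) : ℝ :=
  dist a b / (Real.sqrt (1 + ‖a‖ ^ 2) * Real.sqrt (1 + ‖b‖ ^ 2))

/-- The chordal (spherical) distance on the Riemann sphere (`none = ∞`). -/
def sphDist : Option ℂ → Option ℂ → ℝ
  | some a, some b => sphDistC a b
  | some a, none => 1 / Real.sqrt (1 + ‖a‖ ^ 2)
  | none, some b => 1 / Real.sqrt (1 + ‖b‖ ^ 2)
  | none, none => 0

/-- The Fatou set of `f`: points having a neighbourhood on which all the iterates are
defined and form a normal (equicontinuous w.r.t. the spherical metric) family. -/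
def FatouSet (f : ℂ → ℂ) : Set ℂ :=
  {z | ∃ U ∈ 𝓝 z, (∀ (n : ℕ) (w : ℂ), w ∈ U → ¬ IsPole f (f^[n] w)) ∧
    ∀ ε > 0, ∃ δ > 0, ∀ (n : ℕ), ∀ w ∈ U, ∀ w' ∈ U, dist w w' < δ →
      sphDistC (f^[n] w) (f^[n] w') < ε}

/-- The Julia set of `f` (its part in the finite plane). -/
def JuliaSet (f : ℂ → ℂ) : Set ℂ := (FatouSet f)ᶜ

/-- The escaping set of `f`. -/
def EscapingSet (f : ℂ → ℂ) : Set ℂ :=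
  {z | (∀ n : ℕ, ¬ IsPole f (f^[n] z)) ∧ Tendsto (fun n => ‖f^[n] z‖) atTop atTop}

/-- The open angle `{z ≠ 0 : α < arg z < β}` (arguments understood modulo `2π`). -/
def AngSector (α β : ℝ) : Set ℂ :=
  {z | z ≠ 0 ∧ ∃ k : ℤ, α < Complex.arg z + 2 * Real.pi * k ∧
    Complex.arg z + 2 * Real.pi * k < β}

/-- `θ` is a limit point of the sequence of arguments `arg (f^[n] a)`. -/
def IsArgLimitPoint (f : ℂ → ℂ) (a : ℂ) (θ : ℝ) : Prop :=
  ∀ ε > 0, ∃ᶠ n in atTop, f^[n] a ∈ AngSector (θ - ε) (θ + ε)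

/-- `arg z = θ` is a Borel direction of order (at least) `ρ` of `f`. -/
def IsBorelDirection (f : ℂ → ℂ) (θ : ℝ) (ρ : ℝ) : Prop :=
  ∀ ε > 0, ∃ a₁ a₂ : Option ℂ, ∀ a : Option ℂ, a ≠ a₁ → a ≠ a₂ →
    (ρ : EReal) ≤ limsup (fun r : ℝ =>
      ((logPlus (valueN f a (AngSector (θ - ε) (θ + ε)) r) / Real.log r : ℝ) : EReal)) atTop

/-- `arg z = θ` is a Borel direction of infinite order of `f`. -/
def IsBorelDirectionInf (f : ℂ → ℂ) (θ : ℝ) : Prop :=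
  ∀ ε > 0, ∃ a₁ a₂ : Option ℂ, ∀ a : Option ℂ, a ≠ a₁ → a ≠ a₂ →
    limsup (fun r : ℝ =>
      ((logPlus (valueN f a (AngSector (θ - ε) (θ + ε)) r) / Real.log r : ℝ) : EReal)) atTop = ⊤

/-- The disk `|z - z₀| < ε|z₀|` is a filling disk of `f` with index `m` : `f` assumes on it
every spherical value at least `m` times, except possibly values lying in two spherical
disks of radius at most `e^{-m}`. -/
def IsFillingDisk (f : ℂ → ℂ) (z₀ : ℂ) (ε : ℝ) (m : ℝ) : Prop :=
  ∃ c₁ c₂ : Option ℂ, ∀ a : Option ℂ,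
    Real.exp (-m) < sphDist a c₁ → Real.exp (-m) < sphDist a c₂ →
      m ≤ (valueCount f a (Metric.ball z₀ (ε * ‖z₀‖)) : ℝ)

/-- The open round annulus `A(r,R) = {z : r < |z| < R}`. -/
def Annulus (r R : ℝ) : Set ℂ := {z | r < ‖z‖ ∧ ‖z‖ < R}


/-- `r_n = M·2^n`. -/
def rSeq (M : ℝ) (n : ℕ) : ℝ := M * 2 ^ n

/-- `[r_n^λ]`, the integer part of `r_n^λ`. -/
def kSeq (lam M : ℝ) (n : ℕ) : ℕ := ⌊(rSeq M n) ^ lam⌋₊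

/-- `r_{n,k} = r_{n+1} − 1 + k/[r_n^λ]`. -/
def rnk (lam M : ℝ) (n k : ℕ) : ℝ := rSeq M (n + 1) - 1 + (k : ℝ) / (kSeq lam M n : ℝ)

/-- The set of points `±r_{n,k}` (the prospective poles of `g`). -/
def poleSet (lam M : ℝ) : Set ℂ :=
  {z | ∃ n, 1 ≤ n ∧ ∃ k, 1 ≤ k ∧ k ≤ kSeq lam M n ∧
    (z = ((rnk lam M n k : ℝ) : ℂ) ∨ z = -((rnk lam M n k : ℝ) : ℂ))}

/-- Partial sums of the series defining `g`. -/
def gPartial (lam M : ℝ) (N : ℕ) (z : ℂ) : ℂ :=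
  ∑ n ∈ Finset.Icc 1 N, ((kSeq lam M n : ℂ))⁻¹ *
    ∑ k ∈ Finset.Icc 1 (kSeq lam M n),
      ((((rnk lam M n k : ℝ) : ℂ) - z)⁻¹ - (((rnk lam M n k : ℝ) : ℂ) + z)⁻¹)

/-- The sum `g` of the full series (summed over `n ≥ 1`). -/
def gFun (lam M : ℝ) (z : ℂ) : ℂ :=
  ∑' n : ℕ, ((kSeq lam M (n + 1) : ℂ))⁻¹ *
    ∑ k ∈ Finset.Icc 1 (kSeq lam M (n + 1)),
      (2 * z / ((((rnk lam M (n + 1) k : ℝ) : ℂ)) ^ 2 - z ^ 2))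

/-!
On the annulus `(4/3)r_n ≤ |z| ≤ (5/3)r_n` every pole `r_{m,k}` with `m < n` satisfies
`r_{m,k} ≤ r_n ≤ (3/4)|z|`, while every pole with `m ≥ n` satisfies
`r_{m,k} ≥ 2r_m - 1`, well beyond `|z| ≤ (5/3)r_m`. The `m`-th block of the series is an
average of terms `2z/(r_{m,k}² - z²)`, so it is bounded by `32/(7|z|) ≤ 24/(7r_n)` in the first
case and by `20/(7r_m)` in the second. The `n` blocks with `m ≤ n` contribute at most
`24n/(7r_n)`, and the blocks with `m > n` form a geometric tail of sum at most `20/(7r_n)`.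
-/

theorem norm_two_mul_div_sq_sub_sq_le {ρ c : ℝ} {z : ℂ} (hc : 0 < c)
    (h : c ≤ |ρ ^ 2 - ‖z‖ ^ 2|) : ‖2 * z / ((ρ : ℂ) ^ 2 - z ^ 2)‖ ≤ 2 * ‖z‖ / c := by
  have hden : c ≤ ‖(ρ : ℂ) ^ 2 - z ^ 2‖ :=
    calc c ≤ |ρ ^ 2 - ‖z‖ ^ 2| := h
      _ = |‖(ρ : ℂ) ^ 2‖ - ‖z ^ 2‖| := by simp only [norm_pow, Complex.norm_real,
          Real.norm_eq_abs, sq_abs]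
      _ ≤ ‖(ρ : ℂ) ^ 2 - z ^ 2‖ := abs_norm_sub_norm_le _ _
  rw [norm_div, norm_mul, Complex.norm_two]
  gcongr

theorem norm_inv_card_mul_sum_le {ι 𝕜 : Type*} [RCLike 𝕜] (s : Finset ι) (t : ι → 𝕜) {C : ℝ}
    (hC : 0 ≤ C) (h : ∀ i ∈ s, ‖t i‖ ≤ C) : ‖(s.card : 𝕜)⁻¹ * ∑ i ∈ s, t i‖ ≤ C := by
  rcases s.eq_empty_or_nonempty with rfl | hs
  · simpa using hC
  rw [norm_mul, norm_inv, RCLike.norm_natCast, inv_mul_le_iff₀ (by simpa using hs.card_pos)]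
  calc ‖∑ i ∈ s, t i‖ ≤ ∑ _i ∈ s, C := norm_sum_le_of_le s h
    _ = s.card * C := by rw [Finset.sum_const, nsmul_eq_mul]

theorem rSeq_add (M : ℝ) (n k : ℕ) : rSeq M (n + k) = rSeq M n * 2 ^ k := by
  simp only [rSeq, pow_add, mul_assoc]

theorem rSeq_succ (M : ℝ) (n : ℕ) : rSeq M (n + 1) = 2 * rSeq M n := by
  rw [rSeq_add, pow_one, mul_comm]

theorem rSeq_mono {M : ℝ} (hM : 0 ≤ M) : Monotone (rSeq M) := fun _ _ h =>
  mul_le_mul_of_nonneg_left (pow_le_pow_right₀ one_le_two h) hM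

theorem seventy_two_le_rSeq {M : ℝ} (hM : 36 ≤ M) {n : ℕ} (hn : 1 ≤ n) : 72 ≤ rSeq M n :=
  calc 72 ≤ rSeq M 1 := by simp only [rSeq, pow_one]; linarith
    _ ≤ rSeq M n := rSeq_mono (by linarith) hn

section

variable {lam M : ℝ} {m k : ℕ}

theorem rnk_le (hk : k ≤ kSeq lam M m) : rnk lam M m k ≤ rSeq M (m + 1) := by
  have : (k : ℝ) / kSeq lam M m ≤ 1 := div_le_one_of_le₀ (by exact_mod_cast hk) (by positivity)
  unfold rnk
  linarith

theorem le_rnk : rSeq M (m + 1) - 1 ≤ rnk lam M m k := by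
  have : 0 ≤ (k : ℝ) / kSeq lam M m := by positivity
  unfold rnk
  linarith

/-- `gFun lam M z = ∑' j, gBlock lam M (j + 1) z` holds by `rfl`. -/
def gBlock (lam M : ℝ) (m : ℕ) (z : ℂ) : ℂ :=
  (kSeq lam M m : ℂ)⁻¹ *
    ∑ k ∈ Finset.Icc 1 (kSeq lam M m), 2 * z / ((rnk lam M m k : ℂ) ^ 2 - z ^ 2)

theorem norm_gBlock_le {z : ℂ} {c : ℝ} (hc : 0 < c)
    (h : ∀ k ∈ Finset.Icc 1 (kSeq lam M m), c ≤ |rnk lam M m k ^ 2 - ‖z‖ ^ 2|) :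
    ‖gBlock lam M m z‖ ≤ 2 * ‖z‖ / c := by
  simpa [gBlock] using norm_inv_card_mul_sum_le (𝕜 := ℂ) _ _ (by positivity)
    fun k hk => norm_two_mul_div_sq_sub_sq_le hc (h k hk)

theorem norm_gBlock_le_of_rSeq_succ_le {z : ℂ} (h1 : 1 ≤ rSeq M (m + 1))
    (hz : rSeq M (m + 1) ≤ 3 / 4 * ‖z‖) : ‖gBlock lam M m z‖ ≤ 32 / (7 * ‖z‖) := by
  have hz0 : 0 < ‖z‖ := by linarith
  calc ‖gBlock lam M m z‖ ≤ 2 * ‖z‖ / (7 / 16 * ‖z‖ ^ 2) := by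
        refine norm_gBlock_le (by positivity) fun k hk => ?_
        have hρ0 : 0 ≤ rnk lam M m k := by linarith [@le_rnk lam M m k]
        have hρ : rnk lam M m k ≤ 3 / 4 * ‖z‖ := (rnk_le (Finset.mem_Icc.1 hk).2).trans hz
        rw [abs_sub_comm]
        exact le_abs.2 (Or.inl (by nlinarith))
    _ = 32 / (7 * ‖z‖) := by field_simp; ring

theorem norm_gBlock_le_of_le_rSeq {z : ℂ} (hr : 72 ≤ rSeq M m)
    (hz : ‖z‖ ≤ 5 / 3 * rSeq M m) : ‖gBlock lam M m z‖ ≤ 20 / (7 * rSeq M m) := by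
  set r := rSeq M m
  calc ‖gBlock lam M m z‖ ≤ 2 * ‖z‖ / (7 / 6 * r ^ 2) := by
        refine norm_gBlock_le (by positivity) fun k _ => ?_
        have hρ : 2 * r - 1 ≤ rnk lam M m k := rSeq_succ M m ▸ le_rnk
        have hz0 := norm_nonneg z
        -- `(2r - 1)² - (5r/3)² - 7r²/6 = r(r - 72)/18 + 1`
        exact le_abs.2 (Or.inl (by nlinarith))
    _ ≤ 20 / (7 * r) := by
        rw [div_le_div_iff₀ (by positivity) (by positivity)]
        nlinarith

end

theorem norm_tsum_le_of_geometric_tail {E : Type*} [SeminormedAddCommGroup E] (f : ℕ → E)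
    (n : ℕ) {a b q : ℝ} (hq0 : 0 ≤ q) (hq1 : q < 1) (hhead : ∀ j < n, ‖f j‖ ≤ a)
    (htail : ∀ i, ‖f (i + n)‖ ≤ b * q ^ i) : ‖∑' j, f j‖ ≤ n * a + b / (1 - q) := by
  have hgeo : Summable fun i => b * q ^ i := (summable_geometric_of_lt_one hq0 hq1).mul_left b
  have hsum_tail : Summable fun i => ‖f (i + n)‖ :=
    .of_nonneg_of_le (fun _ => norm_nonneg _) htail hgeo
  have hsum : Summable fun j => ‖f j‖ := (summable_nat_add_iff n).1 hsum_tail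
  calc ‖∑' j, f j‖ ≤ ∑' j, ‖f j‖ := norm_tsum_le_tsum_norm hsum
    _ = ∑ j ∈ Finset.range n, ‖f j‖ + ∑' i, ‖f (i + n)‖ := (hsum.sum_add_tsum_nat_add n).symm
    _ ≤ ∑ _j ∈ Finset.range n, a + ∑' i, b * q ^ i :=
        add_le_add (Finset.sum_le_sum fun j hj => hhead j (Finset.mem_range.1 hj))
          (hsum_tail.tsum_le_tsum htail hgeo)
    _ = n * a + b / (1 - q) := by
        rw [Finset.sum_const, Finset.card_range, nsmul_eq_mul, tsum_mul_left,
          tsum_geometric_of_lt_one hq0 hq1, div_eq_mul_inv]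

theorem norm_gFun_le {lam M : ℝ} (hM : 36 ≤ M) {n : ℕ} (hn : 1 ≤ n) {z : ℂ}
    (hz₁ : 4 / 3 * rSeq M n ≤ ‖z‖) (hz₂ : ‖z‖ ≤ 5 / 3 * rSeq M n) :
    ‖gFun lam M z‖ ≤ 30 * n / (7 * rSeq M n) + 4 / rSeq M n := by
  set R := rSeq M n
  have hR : 72 ≤ R := seventy_two_le_rSeq hM hn
  have hhead : ∀ j < n, ‖gBlock lam M (j + 1) z‖ ≤ 24 / (7 * R) := by
    intro j hj
    rcases (Nat.succ_le_of_lt hj).lt_or_eq with hlt | rfl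
    · have hr : rSeq M (j + 1 + 1) ≤ R := rSeq_mono (by linarith) hlt
      calc ‖gBlock lam M (j + 1) z‖ ≤ 32 / (7 * ‖z‖) :=
            norm_gBlock_le_of_rSeq_succ_le
              (by linarith [seventy_two_le_rSeq hM (Nat.le_add_left 1 (j + 1))]) (by linarith)
        _ ≤ 24 / (7 * R) := by
            rw [div_le_div_iff₀ (by linarith) (by linarith)]
            linarith
    · calc ‖gBlock lam M (j + 1) z‖ ≤ 20 / (7 * R) := norm_gBlock_le_of_le_rSeq hR hz₂
        _ ≤ 24 / (7 * R) := by gcongr; norm_num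
  have htail : ∀ i, ‖gBlock lam M (i + n + 1) z‖ ≤ 10 / (7 * R) * (1 / 2) ^ i := by
    intro i
    have hr : rSeq M (i + n + 1) = R * 2 ^ (i + 1) := by
      rw [show i + n + 1 = n + (i + 1) by ring, rSeq_add]
    have h2 : (1 : ℝ) ≤ 2 ^ (i + 1) := one_le_pow₀ one_le_two
    calc ‖gBlock lam M (i + n + 1) z‖ ≤ 20 / (7 * rSeq M (i + n + 1)) :=
          norm_gBlock_le_of_le_rSeq (by rw [hr]; nlinarith) (by rw [hr]; nlinarith)
      _ = 10 / (7 * R) * (1 / 2) ^ i := by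
          rw [hr, pow_succ, one_div, inv_pow]; field_simp; ring
  calc ‖gFun lam M z‖ ≤ n * (24 / (7 * R)) + 10 / (7 * R) / (1 - 1 / 2) :=
        norm_tsum_le_of_geometric_tail (fun j => gBlock lam M (j + 1) z) n (by norm_num)
          (by norm_num) hhead htail
    _ ≤ 30 * n / (7 * R) + 4 / R := by
        have : (0 : ℝ) ≤ n := n.cast_nonneg
        field_simp
        nlinarith

theorem tendsto_sSup_nhds_zero_of_le {ι : Type*} {l : Filter ι} {S : ι → Set ℝ} {B : ι → ℝ}
    (hB : Tendsto B l (𝓝 0)) (h0 : ∀ i, ∀ x ∈ S i, 0 ≤ x)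
    (hle : ∀ᶠ i in l, ∀ x ∈ S i, x ≤ B i) : Tendsto (fun i => sSup (S i)) l (𝓝 0) := by
  have hmax : Tendsto (fun i => max (B i) 0) l (𝓝 0) := by
    simpa using hB.max (tendsto_const_nhds (x := (0 : ℝ)))
  refine squeeze_zero' (.of_forall fun i => Real.sSup_nonneg (h0 i)) ?_ hmax
  filter_upwards [hle] with i hi
  exact Real.sSup_le (fun x hx => le_max_of_le_left (hi x hx)) (le_max_right _ _)

theorem tendsto_annulus_bound (M : ℝ) :
    Tendsto (fun n : ℕ => 30 * n / (7 * rSeq M n) + 4 / rSeq M n) atTop (𝓝 0) := by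
  have h₁ := (tendsto_pow_const_div_const_pow_of_one_lt 1 one_lt_two).const_mul (30 / (7 * M))
  have h₂ := (tendsto_inv_atTop_zero.comp
    (tendsto_pow_atTop_atTop_of_one_lt one_lt_two)).const_mul (4 / M)
  simpa [rSeq, div_eq_mul_inv, mul_inv, mul_assoc, mul_comm, mul_left_comm] using h₁.add h₂

theorem gFun_small_on_annuli_general (lam M : ℝ) (hM : 36 ≤ M) :
    (∀ n : ℕ, 1 ≤ n → ∀ z : ℂ,
      4 / 3 * rSeq M n ≤ ‖z‖ → ‖z‖ ≤ 5 / 3 * rSeq M n →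
      ‖gFun lam M z‖ ≤ 30 * n / (7 * rSeq M n) + 4 / rSeq M n) ∧
    Tendsto (fun n : ℕ => sSup {x : ℝ | ∃ z : ℂ,
        4 / 3 * rSeq M n ≤ ‖z‖ ∧ ‖z‖ ≤ 5 / 3 * rSeq M n ∧ x = ‖gFun lam M z‖})
      atTop (𝓝 0) := by
  refine ⟨fun n hn z hz₁ hz₂ => norm_gFun_le hM hn hz₁ hz₂,
    tendsto_sSup_nhds_zero_of_le (tendsto_annulus_bound M) ?_ ?_⟩
  · rintro n x ⟨z, -, -, rfl⟩
    exact norm_nonneg _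
  · filter_upwards [eventually_ge_atTop 1] with n hn
    rintro x ⟨z, hz₁, hz₂, rfl⟩
    exact norm_gFun_le hM hn hz₁ hz₂

/-- bound for `g` on the annuli `(4/3)r_n ≤ |z| ≤ (5/3)r_n`. -/
theorem gFun_small_on_annuli (lam M : ℝ) (hlam : 1 / 2 < lam) (hM : 36 ≤ M) :
    (∀ n : ℕ, 1 ≤ n → ∀ z : ℂ,
      4 / 3 * rSeq M n ≤ ‖z‖ → ‖z‖ ≤ 5 / 3 * rSeq M n →
      ‖gFun lam M z‖ ≤ 30 * n / (7 * rSeq M n) + 4 / rSeq M n) ∧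
    Tendsto (fun n : ℕ => sSup {x : ℝ | ∃ z : ℂ,
        4 / 3 * rSeq M n ≤ ‖z‖ ∧ ‖z‖ ≤ 5 / 3 * rSeq M n ∧ x = ‖gFun lam M z‖})
      atTop (𝓝 0) :=
  gFun_small_on_annuli_general lam M hM

end PaperDyn
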